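/- The critical exponent for 3×3 GDN matrices equals 2: (a) there exists a 3×3 GDN matrix A and α ∈ (1,2) with A^α having a negative entry; (b) for every 3×3 GDN matrix A and every real α > 2, A^α is entrywise nonnegative. -/

import Mathlib

open Matrix

/-- The continuous power `A^α := S * D^α * S⁻¹` of a diagonalizable matrix
`A = S * diagonal d * S⁻¹`. -/
noncomputable def contPow {n : ℕ} (S : Matrix (Fin n) (Fin n) ℝ) (d : Fin n → ℝ) (α : ℝ) :
    Matrix (Fin n) (Fin n) ℝ :=
  S * Matrix.diagonal (fun i => d i ^ α) * S⁻¹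

/-!
For `A = S D S⁻¹` with `D ≥ 0`, every entry `t ↦ (A^t)ᵢⱼ = ∑ₖ Sᵢₖ (S⁻¹)ₖⱼ dₖ^t` is, for `t > 0`,
an exponential sum with at most three terms, and by Rolle's theorem such a sum is identically zero
as soon as it has as many zeros as terms. Off the diagonal the entry vanishes at `t = 0` and is
nonnegative at every natural number, so a negative value at some `β ≥ 1` would produce two
further zeros, one in `[1, β)` and one beyond `β`: too many. For `α ≥ 2` the diagonal entries of
`A^α = A^(α/2) A^(α/2)` are sums of squares and of products of off-diagonal entries of `A^(α/2)`.
-/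

open Real Set

noncomputable def expSum {ι : Type*} (s : Finset ι) (c r : ι → ℝ) (x : ℝ) : ℝ :=
  ∑ i ∈ s, c i * exp (r i * x)

section ExpSum

variable {ι : Type*} (s : Finset ι) (c r : ι → ℝ)

theorem hasDerivAt_expSum (x : ℝ) :
    HasDerivAt (expSum s c r) (expSum s (fun i => c i * r i) r x) x := by
  unfold expSum
  refine HasDerivAt.fun_sum fun i _ => ?_
  exact ((((hasDerivAt_id x).const_mul (r i)).exp).const_mul (c i)).congr_deriv (by
    simp only [id, mul_one]; ring)

theorem continuous_expSum : Continuous (expSum s c r) := by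
  unfold expSum; fun_prop

theorem expSum_eq_exp_mul (a x : ℝ) :
    expSum s c r x = exp (a * x) * expSum s c (fun i => r i - a) x := by
  simp only [expSum, Finset.mul_sum]
  refine Finset.sum_congr rfl fun i _ => ?_
  rw [mul_left_comm, ← exp_add]
  ring_nf

theorem expSum_eq_zero_of_card_le {m : ℕ} {t : Fin m → ℝ} (ht : StrictMono t)
    (hs : s.card ≤ m) (hz : ∀ k, expSum s c r (t k) = 0) : expSum s c r = 0 := by
  classical
  induction s using Finset.induction_on generalizing c r m with
  | empty => funext x; simp [expSum]
  | insert a s ha ih =>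
    obtain ⟨m, rfl⟩ : ∃ m', m = m' + 1 :=
      Nat.exists_eq_succ_of_ne_zero (by rw [Finset.card_insert_of_notMem ha] at hs; omega)
    set r' : ι → ℝ := fun i => r i - r a
    set g := expSum (insert a s) c r'
    have hfg : ∀ x, expSum (insert a s) c r x = exp (r a * x) * g x :=
      expSum_eq_exp_mul _ c r (r a)
    -- the rate of `a` is shifted to `0`, so its term drops out of the derivative
    have hg' : ∀ x, HasDerivAt g (expSum s (fun i => c i * r' i) r' x) x := by
      intro x
      convert hasDerivAt_expSum (insert a s) c r' x using 1
      simp [expSum, Finset.sum_insert ha, r']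
    have hgt : ∀ k, g (t k) = 0 := fun k => by
      simpa [hfg, exp_ne_zero] using hz k
    have hRolle : ∀ k : Fin m, ∃ u ∈ Ioo (t k.castSucc) (t k.succ),
        expSum s (fun i => c i * r' i) r' u = 0 := fun k =>
      exists_hasDerivAt_eq_zero (ht Fin.castSucc_lt_succ)
        (continuous_expSum _ _ _).continuousOn ((hgt _).trans (hgt _).symm) fun x _ => hg' x
    choose u hu hu0 using hRolle
    have hu_mono : StrictMono u := fun k l hkl =>
      (hu k).2.trans ((ht.monotone (Fin.succ_le_castSucc_iff.2 hkl)).trans_lt (hu l).1)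
    have hderiv := ih _ _ hu_mono (by simpa [Finset.card_insert_of_notMem ha] using hs) hu0
    have hconst := is_const_of_deriv_eq_zero (fun x => (hg' x).differentiableAt)
      fun x => by rw [(hg' x).deriv, hderiv, Pi.zero_apply]
    funext x
    rw [hfg, hconst x (t 0), hgt, mul_zero, Pi.zero_apply]

end ExpSum

theorem exists_zeros_of_neg {g : ℝ → ℝ} (hg : Continuous g) (hn : ∀ n : ℕ, 1 ≤ n → 0 ≤ g n)
    {β : ℝ} (hβ : 1 ≤ β) (hgβ : g β < 0) :
    ∃ z₁ z₂, 1 ≤ z₁ ∧ z₁ < β ∧ β < z₂ ∧ g z₁ = 0 ∧ g z₂ = 0 := by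
  obtain ⟨N, hN⟩ := exists_nat_gt β
  obtain ⟨z₁, ⟨h1, hz₁β⟩, hz₁⟩ := intermediate_value_Icc' hβ hg.continuousOn
    ⟨hgβ.le, by simpa using hn 1 le_rfl⟩
  obtain ⟨z₂, ⟨hβz₂, -⟩, hz₂⟩ := intermediate_value_Icc hN.le hg.continuousOn
    ⟨hgβ.le, hn N (by exact_mod_cast (hβ.trans_lt hN).le)⟩
  refine ⟨z₁, z₂, h1, hz₁β.lt_of_ne ?_, hβz₂.lt_of_ne ?_, hz₁, hz₂⟩ <;> rintro rfl <;> linarith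

section RpowSum

variable {ι : Type*} [Fintype ι] {c x : ι → ℝ}

theorem sum_mul_rpow_eq_expSum (hx : ∀ k, 0 ≤ x k) {t : ℝ} (ht : t ≠ 0) :
    ∑ k, c k * x k ^ t = expSum {k | x k ≠ 0} c (fun k => log (x k)) t := by
  rw [expSum, Finset.sum_filter]
  refine Finset.sum_congr rfl fun k _ => ?_
  rw [rpow_def_of_nonneg (hx k)]
  split_ifs <;> simp_all

theorem sum_mul_rpow_nonneg (hι : Fintype.card ι ≤ 3) (hx : ∀ k, 0 ≤ x k) (hc : ∑ k, c k = 0)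
    (hn : ∀ n : ℕ, 0 ≤ ∑ k, c k * x k ^ n) {β : ℝ} (hβ : 1 ≤ β) :
    0 ≤ ∑ k, c k * x k ^ β := by
  set s : Finset ι := {k | x k ≠ 0}
  set E := expSum s c (fun k => log (x k))
  have hE : ∀ t ≠ 0, ∑ k, c k * x k ^ t = E t := fun t ht => sum_mul_rpow_eq_expSum hx ht
  rw [hE β (by positivity)]
  by_contra! hneg
  obtain ⟨z₁, z₂, h1, hz₁β, hβz₂, hz₁, hz₂⟩ := exists_zeros_of_neg (g := E)
    (continuous_expSum _ _ _)
    (fun n hn1 => by rw [← hE n (by norm_cast; omega)]; exact_mod_cast hn n) hβ hneg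
  suffices E = 0 by simp [this] at hneg
  -- `E` agrees with the power sum at `t = 0` only when no base vanishes;
  -- otherwise `E` has at most two terms and the zeros `z₁, z₂` suffice.
  by_cases hs : s = Finset.univ
  · have hmono : StrictMono ![0, z₁, z₂] := Fin.strictMono_iff_lt_succ.2 fun k => by
      fin_cases k; exacts [zero_lt_one.trans_le h1, hz₁β.trans hβz₂]
    refine expSum_eq_zero_of_card_le s _ _ hmono (by simpa [hs] using hι) fun k => ?_
    fin_cases k
    · simpa [E, expSum, hs] using hc
    · exact hz₁
    · exact hz₂
  · have hs2 : s.card ≤ 2 := by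
      have := Finset.card_lt_card (Finset.ssubset_univ_iff.2 hs)
      rw [Finset.card_univ] at this
      omega
    have hmono : StrictMono ![z₁, z₂] := Fin.strictMono_iff_lt_succ.2 fun k => by
      fin_cases k; exact hz₁β.trans hβz₂
    refine expSum_eq_zero_of_card_le s _ _ hmono hs2 fun k => ?_
    fin_cases k
    · exact hz₁
    · exact hz₂

end RpowSum

section ContPow

variable {n : ℕ} (S : Matrix (Fin n) (Fin n) ℝ) (d : Fin n → ℝ)

theorem contPow_apply (α : ℝ) (i j : Fin n) :
    contPow S d α i j = ∑ k, S i k * S⁻¹ k j * d k ^ α := by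
  rw [contPow, mul_apply]
  simp only [mul_diagonal]
  exact Finset.sum_congr rfl fun k _ => mul_right_comm ..

variable {S}

theorem contPow_natCast (hS : IsUnit S.det) (m : ℕ) :
    contPow S d m = (S * diagonal d * S⁻¹) ^ m := by
  have h := Units.conj_pow (nonsingInvUnit S hS) (diagonal d) m
  change (S * diagonal d * S⁻¹) ^ m = S * diagonal d ^ m * S⁻¹ at h
  rw [h, diagonal_pow, contPow]
  simp only [rpow_natCast]
  rfl

theorem contPow_zero (hS : IsUnit S.det) : contPow S d 0 = 1 := by
  simpa using contPow_natCast d hS 0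

theorem contPow_add (hS : IsUnit S.det) (hd : ∀ k, 0 ≤ d k) {α β : ℝ} (h : α + β ≠ 0) :
    contPow S d (α + β) = contPow S d α * contPow S d β := by
  calc contPow S d (α + β)
      = S * (diagonal (fun k => d k ^ α) * (S⁻¹ * S) * diagonal (fun k => d k ^ β)) * S⁻¹ := by
        simp_rw [nonsing_inv_mul S hS, Matrix.mul_one, diagonal_mul_diagonal,
          ← rpow_add' (hd _) h, contPow]
    _ = contPow S d α * contPow S d β := by simp only [contPow, Matrix.mul_assoc]

end ContPow

section GDN

variable {n : ℕ} {S : Matrix (Fin n) (Fin n) ℝ} {d : Fin n → ℝ}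

theorem contPow_apply_nonneg_of_ne (hn : n ≤ 3) (hS : IsUnit S.det) (hd : ∀ k, 0 ≤ d k)
    (hA : ∀ i j, 0 ≤ (S * diagonal d * S⁻¹) i j) {i j : Fin n} (hij : i ≠ j) {β : ℝ} (hβ : 1 ≤ β) :
    0 ≤ contPow S d β i j := by
  rw [contPow_apply]
  refine sum_mul_rpow_nonneg (c := fun k => S i k * S⁻¹ k j) (by simpa using hn) hd ?_ ?_ hβ
  · simpa [contPow_apply, one_apply_ne hij] using congr_fun₂ (contPow_zero d hS) i j
  · intro m
    have h := pow_apply_nonneg hA m i j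
    rw [← contPow_natCast d hS, contPow_apply] at h
    simpa using h

theorem contPow_apply_self_nonneg (hn : n ≤ 3) (hS : IsUnit S.det) (hd : ∀ k, 0 ≤ d k)
    (hA : ∀ i j, 0 ≤ (S * diagonal d * S⁻¹) i j) (i : Fin n) {α : ℝ} (hα : 2 ≤ α) :
    0 ≤ contPow S d α i i := by
  rw [← add_halves α, contPow_add d hS hd (by linarith), mul_apply]
  refine Finset.sum_nonneg fun k _ => ?_
  rcases eq_or_ne k i with rfl | hk
  · exact mul_self_nonneg _
  · exact mul_nonneg (contPow_apply_nonneg_of_ne hn hS hd hA hk.symm (by linarith))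
      (contPow_apply_nonneg_of_ne hn hS hd hA hk (by linarith))

theorem contPow_apply_nonneg_of_two_le (hn : n ≤ 3) (hS : IsUnit S.det) (hd : ∀ k, 0 ≤ d k)
    (hA : ∀ i j, 0 ≤ (S * diagonal d * S⁻¹) i j) {α : ℝ} (hα : 2 ≤ α) (i j : Fin n) :
    0 ≤ contPow S d α i j := by
  rcases eq_or_ne i j with rfl | hij
  · exact contPow_apply_self_nonneg hn hS hd hA i hα
  · exact contPow_apply_nonneg_of_ne hn hS hd hA hij (by linarith)

end GDN

/-- The `(1,1)` entry of `A^t` is `(4^t - 4)(4^t - 12)/33`, negative for `4 < 4^t < 12`. -/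
theorem exists_GDN_contPow_apply_neg :
    ∃ (A S : Matrix (Fin 3) (Fin 3) ℝ) (d : Fin 3 → ℝ) (α : ℝ) (i j : Fin 3),
      (∀ i j, 0 ≤ A i j) ∧ (∀ k, 0 ≤ d k) ∧ IsUnit S.det ∧
        A = S * Matrix.diagonal d * S⁻¹ ∧
        1 < α ∧ α < 2 ∧ contPow S d α i j < 0 := by
  set S : Matrix (Fin 3) (Fin 3) ℝ := !![4, -1, 1; 1, 2, -4; 4, 2, -1]
  have hS : S * !![2/11, 1/33, 2/33; -5/11, -8/33, 17/33; -2/11, -4/11, 3/11] = 1 := by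
    ext i j
    fin_cases i <;> fin_cases j <;>
      norm_num [S, mul_apply, Fin.sum_univ_three, cons_val_two, vecHead, vecTail]
  refine ⟨!![146/11, 28/11, 23/11; 0, 0, 4; 90/11, 4/11, 85/11], S, ![16, 4, 1], 3/2, 1, 1,
    ?_, ?_, isUnit_det_of_right_inverse hS, ?_, by norm_num, by norm_num, ?_⟩
  · intro i j
    fin_cases i <;> fin_cases j <;> norm_num
  · intro k
    fin_cases k <;> norm_num
  · rw [inv_eq_right_inv hS]
    ext i j
    fin_cases i <;> fin_cases j <;>
      norm_num [S, mul_apply, Fin.sum_univ_three, vecMul_diagonal, cons_val_two, vecHead, vecTail]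
  · norm_num [contPow, inv_eq_right_inv hS, S, mul_apply, Fin.sum_univ_three, vecMul_diagonal,
      cons_val_two, vecHead, vecTail]

/-- The critical exponent for `3 × 3` GDN matrices equals `2`:
(a) some `3 × 3` GDN matrix has a continuous power `A^α`, `α ∈ (1,2)`, with a negative
entry; (b) every `3 × 3` GDN matrix has `A^α` entrywise nonnegative for every `α > 2`. -/
theorem GDN_critical_exponent_three :
    (∃ (A S : Matrix (Fin 3) (Fin 3) ℝ) (d : Fin 3 → ℝ) (α : ℝ) (i j : Fin 3),
      (∀ i j, 0 ≤ A i j) ∧ (∀ k, 0 ≤ d k) ∧ IsUnit S.det ∧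
        A = S * Matrix.diagonal d * S⁻¹ ∧
        1 < α ∧ α < 2 ∧ contPow S d α i j < 0) ∧
    (∀ (A S : Matrix (Fin 3) (Fin 3) ℝ) (d : Fin 3 → ℝ),
      (∀ i j, 0 ≤ A i j) → (∀ k, 0 ≤ d k) → IsUnit S.det →
        A = S * Matrix.diagonal d * S⁻¹ →
        ∀ α : ℝ, 2 < α → ∀ i j, 0 ≤ contPow S d α i j) := by
  refine ⟨exists_GDN_contPow_apply_neg, ?_⟩
  rintro A S d hA hd hS rfl α hα i j
  exact contPow_apply_nonneg_of_two_le le_rfl hS hd hA hα.le i j
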